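/- Let θ be a nonconstant inner function and w ∈ D a point with w ≠ θ(z) for the Frostman shift to be nonconstant; define φ := (θ − w)/(1 − \bar{w}θ). Then φ is an inner function and, for every 1 ≤ p ≤ ∞, K^p_θ = (1 − \bar{w}θ)·K^p_φ := { (1 − \bar{w}θ)·h : h ∈ K^p_φ }. -/

import Mathlib

open MeasureTheory Complex Set Metric ENNReal

noncomputable section

/-- Normalized Lebesgue (arclength) measure `m` on the unit circle `T`, as a measure on `ℂ`. -/
def circleMeasure : Measure ℂ :=
  (ENNReal.ofReal (2 * Real.pi))⁻¹ •
    Measure.map (fun t : ℝ => Complex.exp (t * Complex.I)) (volume.restrict (Ioc 0 (2 * Real.pi)))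

/-- The open unit disk `D`. -/
def unitDisk : Set ℂ := ball (0 : ℂ) 1

/-- `g` is, `m`-a.e. on the circle, the (radial) boundary-value function of `f`. -/
def IsBoundaryValue (f g : ℂ → ℂ) : Prop :=
  ∀ᵐ ζ ∂circleMeasure,
    Filter.Tendsto (fun r : ℝ => f (((r : ℂ)) * ζ)) (nhdsWithin 1 (Iio 1)) (nhds (g ζ))

/-- The Hardy norm `‖f‖_p`; for `p = ∞` it is the sup norm over the disk. -/
def hNorm (p : ℝ≥0∞) (f : ℂ → ℂ) : ℝ≥0∞ :=
  if p = ⊤ then ⨆ z : unitDisk, (‖f (z : ℂ)‖₊ : ℝ≥0∞)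
  else ⨆ r : Ioo (0 : ℝ) 1,
    (∫⁻ ζ, (‖f ((((r : ℝ) : ℂ)) * ζ)‖₊ : ℝ≥0∞) ^ p.toReal ∂circleMeasure) ^ (1 / p.toReal)

/-- Membership in the Hardy space `H^p` (with `f` identified with its boundary values,
i.e. the values of `f` on the circle are `m`-a.e. its radial limits from the disk). -/
def MemHp (p : ℝ≥0∞) (f : ℂ → ℂ) : Prop :=
  DifferentiableOn ℂ f unitDisk ∧ hNorm p f < ⊤ ∧ IsBoundaryValue f f

/-- Inner functions: bounded holomorphic with unimodular boundary values. -/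
def IsInner (θ : ℂ → ℂ) : Prop :=
  MemHp ⊤ θ ∧ ∀ᵐ ζ ∂circleMeasure, ‖θ ζ‖ = 1

/-- `θ` is nonconstant on the unit disk. -/
def Nonconstant (θ : ℂ → ℂ) : Prop := ¬ ∃ c : ℂ, ∀ z ∈ unitDisk, θ z = c

/-- Membership in the star-invariant subspace `K^p_θ`:  `f ∈ H^p` and the function
`ζ ↦ conj ζ * conj (f ζ) * θ ζ` on the circle coincides `m`-a.e. with (the boundary values of)
an `H^p` function. -/
def MemKp (p : ℝ≥0∞) (θ f : ℂ → ℂ) : Prop :=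
  MemHp p f ∧ ∃ h : ℂ → ℂ, MemHp p h ∧
    ∀ᵐ ζ ∂circleMeasure, h ζ = (starRingEnd ℂ) ζ * (starRingEnd ℂ) (f ζ) * θ ζ

/-- `u ∈ Re H^p`. -/
def MemReHp (p : ℝ≥0∞) (u : ℂ → ℝ) : Prop :=
  ∃ f : ℂ → ℂ, MemHp p f ∧ ∀ᵐ ζ ∂circleMeasure, u ζ = (f ζ).re

/-- `u ∈ Re K^p_θ`. -/
def MemReKp (p : ℝ≥0∞) (θ : ℂ → ℂ) (u : ℂ → ℝ) : Prop :=
  ∃ f : ℂ → ℂ, MemKp p θ f ∧ ∀ᵐ ζ ∂circleMeasure, u ζ = (f ζ).re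

/-!
An inner function is bounded by `1` in the disk: letting `r → 1` in Poisson's formula for
`θ (r ·)` (dominated convergence) represents `θ` as the Poisson integral of its unimodular
boundary values. Hence `d := 1 - conj w * θ` satisfies `1 - ‖w‖ ≤ ‖d‖ ≤ 2` on the disk and a.e.
on the circle, so `d` and `1 / d` are bounded multipliers of every `H^p`. On the circle
`conj d * θ = θ - w`, i.e. `φ = conj d * θ / d`, which turns the conjugation condition defining
`K^p_θ` for `f = d h` into the one defining `K^p_φ` for `h`, and back.
-/

open Real
open scoped Interval NNReal

lemma ae_circleMeasure_norm_eq_one : ∀ᵐ ζ ∂circleMeasure, ‖ζ‖ = 1 := by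
  have hexp : Measurable fun t : ℝ => Complex.exp (t * Complex.I) := by fun_prop
  rw [circleMeasure, Measure.ae_ennreal_smul_measure_iff (ENNReal.inv_ne_zero.2 ofReal_ne_top),
    ae_map_iff hexp.aemeasurable (isClosed_eq continuous_norm continuous_const).measurableSet]
  exact Filter.Eventually.of_forall fun t => by simp

lemma ae_uIoc_of_ae_circleMeasure {P : ℂ → Prop} (h : ∀ᵐ ζ ∂circleMeasure, P ζ) :
    ∀ᵐ t : ℝ, t ∈ Ι 0 (2 * π) → P (circleMap 0 1 t) := by
  have hexp : Measurable fun t : ℝ => Complex.exp (t * Complex.I) := by fun_prop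
  rw [circleMeasure, Measure.ae_ennreal_smul_measure_iff (ENNReal.inv_ne_zero.2 ofReal_ne_top)] at h
  rw [uIoc_of_le two_pi_pos.le, ← ae_restrict_iff' measurableSet_Ioc]
  simpa [circleMap] using ae_of_ae_map hexp.aemeasurable h

lemma ofReal_mul_mem_unitDisk {r : ℝ} {z : ℂ} (hr : r ∈ Ioo (0 : ℝ) 1) (hz : ‖z‖ ≤ 1) :
    (r : ℂ) * z ∈ unitDisk := by
  simp only [unitDisk, mem_ball_zero_iff, norm_mul, Complex.norm_real, Real.norm_eq_abs,
    abs_of_pos hr.1]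
  nlinarith [mul_le_mul_of_nonneg_left hz hr.1.le, hr.2]

lemma ae_ofReal_mul_mem_unitDisk {r : ℝ} (hr : r ∈ Ioo (0 : ℝ) 1) :
    ∀ᵐ ζ ∂circleMeasure, (r : ℂ) * ζ ∈ unitDisk :=
  ae_circleMeasure_norm_eq_one.mono fun _ hζ => ofReal_mul_mem_unitDisk hr hζ.le

lemma hNorm_congr {f g : ℂ → ℂ} (h : EqOn f g unitDisk) (p : ℝ≥0∞) : hNorm p f = hNorm p g := by
  unfold hNorm
  split_ifs
  · exact iSup_congr fun z => by rw [h z.2]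
  · refine iSup_congr fun r => ?_
    congr 1
    refine lintegral_congr_ae ?_
    filter_upwards [ae_ofReal_mul_mem_unitDisk r.2] with ζ hζ
    rw [h hζ]

lemma hNorm_le_mul {f g : ℂ → ℂ} {C : ℝ≥0} (hC : ∀ z ∈ unitDisk, ‖f z‖ ≤ C * ‖g z‖)
    {p : ℝ≥0∞} (hp : p ≠ 0) : hNorm p f ≤ C * hNorm p g := by
  have hC' : ∀ z ∈ unitDisk, (‖f z‖₊ : ℝ≥0∞) ≤ C * ‖g z‖₊ := fun z hz => by
    rw [← ENNReal.coe_mul, ENNReal.coe_le_coe, ← NNReal.coe_le_coe]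
    simpa using hC z hz
  unfold hNorm
  split_ifs with hptop
  · refine iSup_le fun z => (hC' z z.2).trans ?_
    gcongr
    exact le_iSup (fun z : unitDisk => (‖g z‖₊ : ℝ≥0∞)) z
  · have hpos : 0 < p.toReal := ENNReal.toReal_pos hp hptop
    refine iSup_le fun r => le_trans ?_ (mul_le_mul_right (le_iSup (fun r : Ioo (0 : ℝ) 1 =>
      (∫⁻ ζ, (‖g ((r : ℂ) * ζ)‖₊ : ℝ≥0∞) ^ p.toReal ∂circleMeasure) ^ (1 / p.toReal)) r) _)
    calc (∫⁻ ζ, (‖f ((r : ℂ) * ζ)‖₊ : ℝ≥0∞) ^ p.toReal ∂circleMeasure) ^ (1 / p.toReal)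
        ≤ (∫⁻ ζ, ((C : ℝ≥0∞) * ‖g ((r : ℂ) * ζ)‖₊) ^ p.toReal ∂circleMeasure) ^ (1 / p.toReal) := by
          gcongr ?_ ^ _
          refine lintegral_mono_ae ?_
          filter_upwards [ae_ofReal_mul_mem_unitDisk r.2] with ζ hζ
          gcongr
          exact hC' _ hζ
      _ = C * (∫⁻ ζ, (‖g ((r : ℂ) * ζ)‖₊ : ℝ≥0∞) ^ p.toReal ∂circleMeasure) ^ (1 / p.toReal) := by
          simp_rw [ENNReal.mul_rpow_of_nonneg _ _ hpos.le]
          rw [lintegral_const_mul' _ _ (ENNReal.rpow_ne_top_of_nonneg hpos.le ENNReal.coe_ne_top),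
            ENNReal.mul_rpow_of_nonneg _ _ (by positivity), ← ENNReal.rpow_mul,
            mul_one_div_cancel hpos.ne', ENNReal.rpow_one]

lemma hNorm_top_lt_top_iff {f : ℂ → ℂ} :
    hNorm ⊤ f < ⊤ ↔ ∃ M, ∀ z ∈ unitDisk, ‖f z‖ ≤ M := by
  rw [hNorm, if_pos rfl]
  constructor
  · intro hfin
    refine ⟨(⨆ z : unitDisk, (‖f z‖₊ : ℝ≥0∞)).toReal, fun z hz => ?_⟩
    simpa using ENNReal.toReal_mono hfin.ne (le_iSup (fun z : unitDisk => (‖f z‖₊ : ℝ≥0∞)) ⟨z, hz⟩)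
  · rintro ⟨M, hM⟩
    refine lt_of_le_of_lt (iSup_le fun z => ?_) (ENNReal.coe_lt_top (r := M.toNNReal))
    rw [ENNReal.coe_le_coe, ← NNReal.coe_le_coe, coe_nnnorm]
    exact (hM z z.2).trans (Real.le_coe_toNNReal M)

lemma poissonKernel_nonneg {c w z : ℂ} {R : ℝ} (hz : z ∈ sphere c R) (hw : w ∈ ball c R) :
    0 ≤ poissonKernel c w z := by
  have hwR : ‖w - c‖ < R := mem_ball_iff_norm.1 hw
  rw [poissonKernel_eq_re_herglotzRieszKernel, Function.comp_apply, herglotzRieszKernel_def]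
  exact (div_nonneg (by linarith) (by linarith [norm_nonneg (w - c)])).trans
    (le_re_herglotzRieszKernel hz hw)

lemma poissonKernel_le {c w z : ℂ} {R : ℝ} (hz : z ∈ sphere c R) (hw : w ∈ ball c R) :
    poissonKernel c w z ≤ (R + ‖w - c‖) / (R - ‖w - c‖) := by
  rw [poissonKernel_eq_re_herglotzRieszKernel, Function.comp_apply, herglotzRieszKernel_def]
  exact re_herglotzRieszKernel_le hz hw

lemma DifferentiableOn.eq_circleAverage_poissonKernel_smul {f g : ℂ → ℂ}
    (hf : DifferentiableOn ℂ f unitDisk) {M : ℝ} (hM : ∀ z ∈ unitDisk, ‖f z‖ ≤ M)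
    (hg : IsBoundaryValue f g) {a : ℂ} (ha : a ∈ unitDisk) :
    f a = circleAverage (poissonKernel 0 a • g) 0 1 := by
  have hsmall : ∀ᶠ r : ℝ in nhdsWithin (1 : ℝ) (Iio 1), r ∈ Ioo (0 : ℝ) 1 :=
    Ioo_mem_nhdsLT (zero_lt_one' ℝ)
  -- Poisson's formula for the dilations `f (r ·)`; the kernel does not depend on `r`.
  have hdilate : ∀ᶠ r : ℝ in nhdsWithin (1 : ℝ) (Iio 1),
      f ((r : ℂ) * a) = circleAverage (poissonKernel 0 a • fun z => f ((r : ℂ) * z)) 0 1 := by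
    filter_upwards [hsmall] with r hr
    have hdiff : DifferentiableOn ℂ (fun z => f ((r : ℂ) * z)) (closure (ball 0 1)) := by
      rw [closure_ball 0 one_ne_zero]
      exact hf.comp (by fun_prop) fun z hz => ofReal_mul_mem_unitDisk hr (by simpa using hz)
    exact (hdiff.diffContOnCl.circleAverage_poissonKernel_smul ha).symm
  have hleft :
      Filter.Tendsto (fun r : ℝ => f ((r : ℂ) * a)) (nhdsWithin 1 (Iio 1)) (nhds (f a)) := by
    have hcont := (hf.continuousOn.continuousAt (isOpen_ball.mem_nhds ha)).tendsto
    refine hcont.comp (tendsto_nhdsWithin_of_tendsto_nhds ?_)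
    exact (by fun_prop : Continuous fun r : ℝ => (r : ℂ) * a).tendsto' 1 a (by simp)
  have hP : Continuous fun t => poissonKernel 0 a (circleMap 0 1 t) := by
    rw [poissonKernel_eq_re_herglotzRieszKernel]
    exact Complex.continuous_re.comp ((continuousOn_herglotzRieszKernel_sphere ha).comp_continuous
      (continuous_circleMap 0 1) fun t => circleMap_mem_sphere' 0 1 t)
  have hright : Filter.Tendsto
      (fun r : ℝ => circleAverage (poissonKernel 0 a • fun z => f ((r : ℂ) * z)) 0 1)
      (nhdsWithin 1 (Iio 1)) (nhds (circleAverage (poissonKernel 0 a • g) 0 1)) := by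
    simp only [circleAverage_def]
    refine Filter.Tendsto.const_smul
      (intervalIntegral.tendsto_integral_filter_of_dominated_convergence
        (fun _ => (1 + ‖a‖) / (1 - ‖a‖) * M) ?_ ?_ intervalIntegrable_const ?_) _
    · filter_upwards [hsmall] with r hr
      refine (hP.smul ?_).aestronglyMeasurable
      exact hf.continuousOn.comp_continuous (by fun_prop) fun t =>
        ofReal_mul_mem_unitDisk hr (by simp)
    · filter_upwards [hsmall] with r hr
      refine Filter.Eventually.of_forall fun t _ => ?_
      rw [Pi.smul_apply', norm_smul]
      have hz := circleMap_mem_sphere 0 zero_le_one t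
      rw [Real.norm_eq_abs, abs_of_nonneg (poissonKernel_nonneg hz ha)]
      have hPle : poissonKernel 0 a (circleMap 0 1 t) ≤ (1 + ‖a‖) / (1 - ‖a‖) := by
        simpa using poissonKernel_le hz ha
      exact mul_le_mul hPle (hM _ (ofReal_mul_mem_unitDisk hr (by simp))) (norm_nonneg _)
        ((poissonKernel_nonneg hz ha).trans hPle)
    · filter_upwards [ae_uIoc_of_ae_circleMeasure hg] with t ht hmem
      exact (ht hmem).const_smul (poissonKernel 0 a (circleMap 0 1 t))
  exact tendsto_nhds_unique (hleft.congr' hdilate) hright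

lemma IsInner.norm_le_one {θ : ℂ → ℂ} (hθ : IsInner θ) {z : ℂ} (hz : z ∈ unitDisk) :
    ‖θ z‖ ≤ 1 := by
  obtain ⟨M, hM⟩ := hNorm_top_lt_top_iff.1 hθ.1.2.1
  have hP : ∀ t, 0 ≤ poissonKernel 0 z (circleMap 0 1 t) :=
    fun t => poissonKernel_nonneg (circleMap_mem_sphere 0 zero_le_one t) hz
  calc ‖θ z‖ = ‖(2 * π)⁻¹ • ∫ t in 0..2 * π, (poissonKernel 0 z • θ) (circleMap 0 1 t)‖ := by
        rw [← circleAverage_def, ← hθ.1.1.eq_circleAverage_poissonKernel_smul hM hθ.1.2.2 hz]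
    _ ≤ (2 * π)⁻¹ * ∫ t in 0..2 * π, ‖(poissonKernel 0 z • θ) (circleMap 0 1 t)‖ := by
        rw [norm_smul, Real.norm_of_nonneg (by positivity)]
        gcongr
        exact intervalIntegral.norm_integral_le_integral_norm two_pi_pos.le
    _ = (2 * π)⁻¹ • ∫ t in 0..2 * π, (poissonKernel 0 z • fun _ => (1 : ℝ)) (circleMap 0 1 t) := by
        congr 1
        refine intervalIntegral.integral_congr_ae ?_
        filter_upwards [ae_uIoc_of_ae_circleMeasure hθ.2] with t ht hmem
        simp [ht hmem, abs_of_nonneg (hP t)]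
    _ = 1 :=
        (InnerProductSpace.harmonicContOnCl_const (c := (1 : ℝ))).circleAverage_poissonKernel_smul
          hz

lemma MemHp.mul {p : ℝ≥0∞} {u b : ℂ → ℂ} (hu : MemHp p u) (hb : MemHp ⊤ b) (hp : p ≠ 0) :
    MemHp p (fun z => u z * b z) := by
  obtain ⟨M, hM⟩ := hNorm_top_lt_top_iff.1 hb.2.1
  refine ⟨hu.1.mul hb.1, ?_, ?_⟩
  · have hbound : ∀ z ∈ unitDisk, ‖u z * b z‖ ≤ M.toNNReal * ‖u z‖ := fun z hz => by
      rw [norm_mul, mul_comm]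
      gcongr
      exact (hM z hz).trans (Real.le_coe_toNNReal M)
    exact (hNorm_le_mul hbound hp).trans_lt (ENNReal.mul_lt_top ENNReal.coe_lt_top hu.2.1)
  · filter_upwards [hu.2.2, hb.2.2] with ζ huζ hbζ
    exact huζ.mul hbζ

lemma MemHp.congr {p : ℝ≥0∞} {f g : ℂ → ℂ} (hf : MemHp p f) (hD : EqOn g f unitDisk)
    (hT : g =ᵐ[circleMeasure] f) : MemHp p g := by
  refine ⟨hf.1.congr hD, hNorm_congr hD p ▸ hf.2.1, ?_⟩
  filter_upwards [hf.2.2, hT, ae_circleMeasure_norm_eq_one] with ζ hlim hζ hnorm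
  rw [hζ]
  refine hlim.congr' ?_
  filter_upwards [Ioo_mem_nhdsLT (zero_lt_one' ℝ)] with r hr
  exact (hD (ofReal_mul_mem_unitDisk hr hnorm.le)).symm

lemma MemHp.const_add_const_mul {θ : ℂ → ℂ} (hθ : MemHp ⊤ θ) (a b : ℂ) :
    MemHp ⊤ (fun z => a + b * θ z) := by
  obtain ⟨M, hM⟩ := hNorm_top_lt_top_iff.1 hθ.2.1
  refine ⟨(differentiableOn_const a).add ((differentiableOn_const b).mul hθ.1),
    hNorm_top_lt_top_iff.2 ⟨‖a‖ + ‖b‖ * M, fun z hz => ?_⟩, ?_⟩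
  · refine (norm_add_le _ _).trans ?_
    rw [norm_mul]
    gcongr
    exact hM z hz
  · filter_upwards [hθ.2.2] with ζ hζ
    exact tendsto_const_nhds.add (tendsto_const_nhds.mul hζ)

lemma one_sub_norm_le_norm_one_sub_mul {c x : ℂ} (hx : ‖x‖ ≤ 1) : 1 - ‖c‖ ≤ ‖1 - c * x‖ := by
  have hcx : ‖c * x‖ ≤ ‖c‖ := by
    rw [norm_mul]
    exact mul_le_of_le_one_right (norm_nonneg c) hx
  have := norm_sub_norm_le (1 : ℂ) (c * x)
  rw [norm_one] at this
  linarith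

lemma one_sub_mul_ne_zero {c x : ℂ} (hc : ‖c‖ < 1) (hx : ‖x‖ ≤ 1) : 1 - c * x ≠ 0 := by
  rw [← norm_pos_iff]
  linarith [one_sub_norm_le_norm_one_sub_mul (c := c) hx]

lemma IsInner.memHp_top_inv_one_sub_mul {θ : ℂ → ℂ} (hθ : IsInner θ) {c : ℂ} (hc : ‖c‖ < 1) :
    MemHp ⊤ (fun z => (1 - c * θ z)⁻¹) := by
  have hne : ∀ z ∈ unitDisk, 1 - c * θ z ≠ 0 := fun z hz =>
    one_sub_mul_ne_zero hc (hθ.norm_le_one hz)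
  refine ⟨?_, hNorm_top_lt_top_iff.2 ⟨(1 - ‖c‖)⁻¹, fun z hz => ?_⟩, ?_⟩
  · exact ((hθ.1.const_add_const_mul 1 (-c)).1.congr fun z _ => by ring).inv hne
  · rw [norm_inv]
    exact inv_anti₀ (by linarith) (one_sub_norm_le_norm_one_sub_mul (hθ.norm_le_one hz))
  · filter_upwards [hθ.1.2.2, hθ.2] with ζ hlim hζ
    exact (tendsto_const_nhds.sub (tendsto_const_nhds.mul hlim)).inv₀
      (one_sub_mul_ne_zero hc hζ.le)

lemma conj_one_sub_conj_mul_mul {w x : ℂ} (hx : ‖x‖ = 1) :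
    starRingEnd ℂ (1 - starRingEnd ℂ w * x) * x = x - w := by
  have hxx : starRingEnd ℂ x * x = 1 := by
    rw [← Complex.normSq_eq_conj_mul_self, Complex.normSq_eq_norm_sq, hx]
    norm_num
  simp only [map_sub, map_one, map_mul, Complex.conj_conj]
  linear_combination (-w) * hxx

lemma IsInner.frostman {θ : ℂ → ℂ} (hθ : IsInner θ) {w : ℂ} (hw : w ∈ unitDisk) :
    IsInner (fun z => (θ z - w) / (1 - starRingEnd ℂ w * θ z)) := by
  have hw1 : ‖starRingEnd ℂ w‖ < 1 := by simpa [unitDisk] using hw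
  have hnum : MemHp ⊤ (fun z => θ z - w) :=
    (hθ.1.const_add_const_mul (-w) 1).congr (fun z _ => by ring) (.of_forall fun ζ => by ring)
  refine ⟨hnum.mul (hθ.memHp_top_inv_one_sub_mul hw1) ENNReal.top_ne_zero, ?_⟩
  filter_upwards [hθ.2] with ζ hζ
  have hnorm := congrArg norm (conj_one_sub_conj_mul_mul (w := w) hζ)
  rw [norm_mul, RCLike.norm_conj, hζ, mul_one] at hnorm
  rw [norm_div, ← hnorm, div_self (norm_ne_zero_iff.2 (one_sub_mul_ne_zero hw1 hζ.le))]

section Frostman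

variable {θ : ℂ → ℂ} {w : ℂ} {p : ℝ≥0∞}

lemma MemKp.div_one_sub_conj_mul (hθ : IsInner θ) (hw : w ∈ unitDisk) (hp : p ≠ 0)
    {f : ℂ → ℂ} (hf : MemKp p θ f) :
    MemKp p (fun z => (θ z - w) / (1 - starRingEnd ℂ w * θ z))
      (fun z => f z / (1 - starRingEnd ℂ w * θ z)) := by
  obtain ⟨hfH, g, hgH, hg⟩ := hf
  have hw1 : ‖starRingEnd ℂ w‖ < 1 := by simpa [unitDisk] using hw
  have hinv := hθ.memHp_top_inv_one_sub_mul hw1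
  refine ⟨hfH.mul hinv hp, fun z => g z / (1 - starRingEnd ℂ w * θ z), hgH.mul hinv hp, ?_⟩
  filter_upwards [hθ.2, hg] with ζ hζ hgζ
  have hd := one_sub_mul_ne_zero hw1 hζ.le
  have hdc : starRingEnd ℂ (1 - starRingEnd ℂ w * θ ζ) ≠ 0 := (map_ne_zero _).2 hd
  rw [hgζ, map_div₀, ← conj_one_sub_conj_mul_mul hζ]
  generalize starRingEnd ℂ (1 - starRingEnd ℂ w * θ ζ) = c at hdc ⊢
  generalize 1 - starRingEnd ℂ w * θ ζ = d at hd ⊢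
  field_simp

lemma MemKp.of_eq_one_sub_conj_mul_mul (hθ : IsInner θ) (hw : w ∈ unitDisk) (hp : p ≠ 0)
    {f h : ℂ → ℂ}
    (hh : MemKp p (fun z => (θ z - w) / (1 - starRingEnd ℂ w * θ z)) h)
    (hD : ∀ z ∈ unitDisk, f z = (1 - starRingEnd ℂ w * θ z) * h z)
    (hT : ∀ᵐ ζ ∂circleMeasure, f ζ = (1 - starRingEnd ℂ w * θ ζ) * h ζ) :
    MemKp p θ f := by
  obtain ⟨hhH, g, hgH, hg⟩ := hh
  have hw1 : ‖starRingEnd ℂ w‖ < 1 := by simpa [unitDisk] using hw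
  have hd : MemHp ⊤ (fun z => 1 - starRingEnd ℂ w * θ z) :=
    (hθ.1.const_add_const_mul 1 (-starRingEnd ℂ w)).congr (fun z _ => by ring)
      (.of_forall fun ζ => by ring)
  refine ⟨(hhH.mul hd hp).congr (fun z hz => by rw [hD z hz, mul_comm])
    (hT.mono fun ζ hζ => by rw [hζ, mul_comm]), fun z => g z * (1 - starRingEnd ℂ w * θ z),
    hgH.mul hd hp, ?_⟩
  filter_upwards [hθ.2, hg, hT] with ζ hζ hgζ hTζ
  have hne := one_sub_mul_ne_zero hw1 hζ.le
  rw [hgζ, hTζ, map_mul, ← conj_one_sub_conj_mul_mul hζ]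
  generalize starRingEnd ℂ (1 - starRingEnd ℂ w * θ ζ) = c
  generalize 1 - starRingEnd ℂ w * θ ζ = d at hne ⊢
  field_simp

end Frostman

theorem frostman_shift_general (θ : ℂ → ℂ) (hθ : IsInner θ)
    (w : ℂ) (hw : w ∈ unitDisk) :
    IsInner (fun z => (θ z - w) / (1 - (starRingEnd ℂ) w * θ z)) ∧
    ∀ p : ℝ≥0∞, 1 ≤ p → ∀ f : ℂ → ℂ,
      MemKp p θ f ↔
        ∃ h : ℂ → ℂ,
          MemKp p (fun z => (θ z - w) / (1 - (starRingEnd ℂ) w * θ z)) h ∧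
          (∀ z ∈ unitDisk, f z = (1 - (starRingEnd ℂ) w * θ z) * h z) ∧
          ∀ᵐ ζ ∂circleMeasure, f ζ = (1 - (starRingEnd ℂ) w * θ ζ) * h ζ := by
  have hw1 : ‖starRingEnd ℂ w‖ < 1 := by simpa [unitDisk] using hw
  refine ⟨hθ.frostman hw, fun p hp f => ?_⟩
  have hp0 : p ≠ 0 := (zero_lt_one.trans_le hp).ne'
  refine ⟨fun hf => ⟨_, hf.div_one_sub_conj_mul hθ hw hp0, fun z hz => ?_, ?_⟩,
    fun ⟨h, hh, hD, hT⟩ => hh.of_eq_one_sub_conj_mul_mul hθ hw hp0 hD hT⟩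
  · rw [mul_div_cancel₀ _ (one_sub_mul_ne_zero hw1 (hθ.norm_le_one hz))]
  · filter_upwards [hθ.2] with ζ hζ
    rw [mul_div_cancel₀ _ (one_sub_mul_ne_zero hw1 hζ.le)]

/-- Frostman shifts: for `θ` nonconstant inner and `w ∈ D` (with `θ` not identically `w`,
so that the Frostman shift is nonconstant), `φ := (θ - w)/(1 - conj w · θ)` is inner and
`K^p_θ = (1 - conj w · θ)·K^p_φ` for every `1 ≤ p ≤ ∞`. -/
theorem frostman_shift (θ : ℂ → ℂ) (hθ : IsInner θ) (hnc : Nonconstant θ)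
    (w : ℂ) (hw : w ∈ unitDisk) (hne : ¬ ∀ z ∈ unitDisk, θ z = w) :
    IsInner (fun z => (θ z - w) / (1 - (starRingEnd ℂ) w * θ z)) ∧
    ∀ p : ℝ≥0∞, 1 ≤ p → ∀ f : ℂ → ℂ,
      MemKp p θ f ↔
        ∃ h : ℂ → ℂ,
          MemKp p (fun z => (θ z - w) / (1 - (starRingEnd ℂ) w * θ z)) h ∧
          (∀ z ∈ unitDisk, f z = (1 - (starRingEnd ℂ) w * θ z) * h z) ∧
          ∀ᵐ ζ ∂circleMeasure, f ζ = (1 - (starRingEnd ℂ) w * θ ζ) * h ζ :=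
  frostman_shift_general θ hθ w hw
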